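/- arXiv:1711.10754 — 2 statements merged into one kernel-verified Lean document; each statement's English description precedes it below -/
import Mathlib

section
/- For a nonempty closed convex set C ⊆ ℝ^n with metric projection P, for every x ∈ C and every d ∈ ℝ^n, the limit lim_{δ→0⁺} (P(x + δd) − x)/δ exists and equals the projection of d onto the tangent cone T_C(x) (the closure of ⋃_{h>0} (C − x)/h). -/
open Set Filter RealInnerProductSpace

/-- The directional derivative of the metric projection onto a closed convex set
at a point of the set is the projection onto the tangent cone. -/
theorem projection_directional_derivative
    {n : ℕ} (C : Set (EuclideanSpace ℝ (Fin n)))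
    (hC : IsClosed C) (hconv : Convex ℝ C) (hne : C.Nonempty)
    (P : EuclideanSpace ℝ (Fin n) → EuclideanSpace ℝ (Fin n))
    (hP : ∀ y, P y ∈ C ∧ ∀ z ∈ C, ‖y - P y‖ ≤ ‖y - z‖)
    (x : EuclideanSpace ℝ (Fin n)) (hx : x ∈ C)
    (d : EuclideanSpace ℝ (Fin n))
    (T : Set (EuclideanSpace ℝ (Fin n)))
    (hT : T = closure {v | ∃ h : ℝ, 0 < h ∧ x + h • v ∈ C})
    (Pd : EuclideanSpace ℝ (Fin n))
    (hPd : Pd ∈ T ∧ ∀ z ∈ T, ‖d - Pd‖ ≤ ‖d - z‖) :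
    Tendsto (fun δ : ℝ => δ⁻¹ • (P (x + δ • d) - x)) (nhdsWithin 0 (Ioi 0))
      (nhds Pd) := by
  set K : Set (EuclideanSpace ℝ (Fin n)) := {v | ∃ h : ℝ, 0 < h ∧ x + h • v ∈ C} with hK
  subst hT
  -- monotonicity: membership at a larger scale implies membership at a smaller one
  have hmono : ∀ v : EuclideanSpace ℝ (Fin n), ∀ h h' : ℝ, 0 < h → h ≤ h' →
      x + h' • v ∈ C → x + h • v ∈ C := by
    intro v h h' hh hhh' hmem
    have h'pos : 0 < h' := hh.trans_le hhh'
    have h'ne : h' ≠ 0 := h'pos.ne'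
    have key : x + h • v = (1 - h / h') • x + (h / h') • (x + h' • v) := by
      rw [smul_add, smul_smul, div_mul_cancel₀ _ h'ne]
      module
    rw [key]
    exact hconv hx hmem (by
      have : h / h' ≤ 1 := (div_le_one h'pos).2 hhh'
      linarith) (by positivity) (by ring)
  -- K is convex
  have hKconv : Convex ℝ K := by
    intro v hv w hw a b ha hb hab
    obtain ⟨h1, h1pos, hv1⟩ := hv
    obtain ⟨h2, h2pos, hw1⟩ := hw
    have hmpos : 0 < min h1 h2 := lt_min h1pos h2pos
    refine ⟨min h1 h2, hmpos, ?_⟩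
    have hv' := hmono v _ h1 hmpos (min_le_left _ _) hv1
    have hw' := hmono w _ h2 hmpos (min_le_right _ _) hw1
    have hcc := hconv hv' hw' ha hb hab
    have ha' : a = 1 - b := by linarith
    subst ha'
    have : (1 - b) • (x + min h1 h2 • v) + b • (x + min h1 h2 • w)
        = x + min h1 h2 • ((1 - b) • v + b • w) := by module
    rwa [this] at hcc
  -- variational inequality for the projection onto the tangent cone
  have hVI : ∀ z ∈ closure K, ⟪d - Pd, z - Pd⟫ ≤ 0 := by
    haveI : Nonempty ↑(closure K) := ⟨⟨Pd, hPd.1⟩⟩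
    have hinf : ‖d - Pd‖ = ⨅ w : closure K, ‖d - (w : EuclideanSpace ℝ (Fin n))‖ := by
      apply le_antisymm
      · exact le_ciInf fun w => hPd.2 w w.2
      · exact ciInf_le ⟨0, forall_mem_range.2 fun w => norm_nonneg _⟩ (⟨Pd, hPd.1⟩ : closure K)
    exact (norm_eq_iInf_iff_real_inner_le_zero hKconv.closure hPd.1).mp hinf
  -- key quadratic estimate
  have hkey : ∀ z ∈ closure K, ‖z - Pd‖ ^ 2 ≤ ‖d - z‖ ^ 2 - ‖d - Pd‖ ^ 2 := by
    intro z hz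
    have h1 := hVI z hz
    have h2 : ‖(d - Pd) - (z - Pd)‖ ^ 2
        = ‖d - Pd‖ ^ 2 - 2 * ⟪d - Pd, z - Pd⟫ + ‖z - Pd‖ ^ 2 :=
      norm_sub_sq_real _ _
    have h3 : (d - Pd) - (z - Pd) = d - z := by abel
    rw [h3] at h2
    linarith
  -- the difference quotient lies in K
  have hq : ∀ δ : ℝ, 0 < δ → δ⁻¹ • (P (x + δ • d) - x) ∈ K := by
    intro δ hδ
    refine ⟨δ, hδ, ?_⟩
    have e : x + δ • (δ⁻¹ • (P (x + δ • d) - x)) = P (x + δ • d) := by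
      rw [smul_smul, mul_inv_cancel₀ hδ.ne', one_smul]
      abel
    rw [e]
    exact (hP _).1
  -- near-optimality of the difference quotient
  have hqle : ∀ v : EuclideanSpace ℝ (Fin n), ∀ h : ℝ, 0 < h → x + h • v ∈ C →
      ∀ δ : ℝ, 0 < δ → δ ≤ h → ‖d - δ⁻¹ • (P (x + δ • d) - x)‖ ≤ ‖d - v‖ := by
    intro v h hh hmem δ hδ hδh
    have hz : x + δ • v ∈ C := hmono v δ h hδ hδh hmem
    have h1 := (hP (x + δ • d)).2 _ hz
    have e1 : x + δ • d - (x + δ • v) = δ • (d - v) := by module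
    have e2 : x + δ • d - P (x + δ • d)
        = δ • (d - δ⁻¹ • (P (x + δ • d) - x)) := by
      rw [smul_sub, smul_smul, mul_inv_cancel₀ hδ.ne', one_smul]
      abel
    rw [e1, e2, norm_smul, norm_smul, Real.norm_eq_abs, abs_of_pos hδ] at h1
    exact le_of_mul_le_mul_left h1 hδ
  -- main ε–δ argument
  rw [Metric.tendsto_nhdsWithin_nhds]
  intro ε hε
  set M := ‖d - Pd‖ with hM
  have hM0 : 0 ≤ M := norm_nonneg _
  set ε' : ℝ := min 1 (ε ^ 2 / (2 * (2 * M + 1))) with hε'def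
  have hε'pos : 0 < ε' := lt_min one_pos (by positivity)
  have hε'le1 : ε' ≤ 1 := min_le_left _ _
  have hε'le : ε' ≤ ε ^ 2 / (2 * (2 * M + 1)) := min_le_right _ _
  obtain ⟨v, hvK, hvd⟩ := Metric.mem_closure_iff.mp hPd.1 ε' hε'pos
  obtain ⟨h, hh, hvmem⟩ := hvK
  refine ⟨h, hh, ?_⟩
  intro δ hδmem hδdist
  have hδ : 0 < δ := hδmem
  have hδh : δ ≤ h := by
    have := hδdist
    rw [Real.dist_eq, sub_zero, abs_of_pos hδ] at this
    exact this.le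
  set q := δ⁻¹ • (P (x + δ • d) - x) with hqdef
  have hqT : q ∈ closure K := subset_closure (hq δ hδ)
  have b1 : ‖q - Pd‖ ^ 2 ≤ ‖d - q‖ ^ 2 - M ^ 2 := hkey q hqT
  have b2 : ‖d - q‖ ≤ ‖d - v‖ := hqle v h hh hvmem δ hδ hδh
  have b3 : ‖d - v‖ ≤ M + ε' := by
    have : d - v = (d - Pd) + (Pd - v) := by abel
    rw [this]
    have hnv : ‖Pd - v‖ ≤ ε' := by
      rw [← dist_eq_norm]
      exact hvd.le
    calc ‖(d - Pd) + (Pd - v)‖ ≤ ‖d - Pd‖ + ‖Pd - v‖ := norm_add_le _ _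
      _ ≤ M + ε' := by rw [hM]; linarith
  have hdq0 : 0 ≤ ‖d - q‖ := norm_nonneg _
  have hqPd0 : 0 ≤ ‖q - Pd‖ := norm_nonneg _
  have b4 : ‖d - q‖ ^ 2 ≤ (M + ε') ^ 2 := by nlinarith
  have hε'mul : ε' * (2 * (2 * M + 1)) ≤ ε ^ 2 :=
    (le_div_iff₀ (by positivity)).mp hε'le
  have hε'sq : ε' * ε' ≤ ε' * 1 := mul_le_mul_of_nonneg_left hε'le1 hε'pos.le
  have b5 : ‖q - Pd‖ ^ 2 < ε ^ 2 := by nlinarith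
  rw [dist_eq_norm]
  nlinarith
end

section
/- Let x_k be a sequence in ℝ^n satisfying x_{k+1} = x_k + a_k H(x_k) + a_k M_{k+1} + r_k with ‖r_k‖ ≤ C a_k², H Lipschitz with constant γ and bounded by C_H on a set containing all iterates, ∑ a_k² < ∞, and ∑_{k} a_k M_{k+1} convergent. Let x^{t_n}(·) solve ẋ = H(x) with x^{t_n}(t_n) = x_n, where t_n = ∑_{m<n} a_m. Then for each fixed T > 0, sup over indices m with t_{n+m} ≤ t_n + T of ‖x_{n+m} − x^{t_n}(t_{n+m})‖ → 0 as n → ∞. -/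
open Set Filter

private lemma gb_zero_mono {K e : ℝ} (hK : 0 ≤ K) (he : 0 ≤ e) :
    ∀ {u v : ℝ}, 0 ≤ u → u ≤ v → gronwallBound 0 K e u ≤ gronwallBound 0 K e v := by
  intro u v hu huv
  rcases eq_or_ne K 0 with h | h
  · simp only [h, gronwallBound_K0, zero_add]
    nlinarith
  · have hK' : 0 < K := lt_of_le_of_ne hK (Ne.symm h)
    simp only [gronwallBound_of_K_ne_0 h, zero_mul, zero_add]
    have hexp : Real.exp (K * u) ≤ Real.exp (K * v) :=
      Real.exp_le_exp.2 (mul_le_mul_of_nonneg_left huv hK)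
    have h2 : 0 ≤ e / K := div_nonneg he hK'.le
    nlinarith

private lemma gb_zero_nonneg {K e u : ℝ} (hK : 0 ≤ K) (he : 0 ≤ e) (hu : 0 ≤ u) :
    0 ≤ gronwallBound 0 K e u := by
  have h := gb_zero_mono hK he (le_refl (0 : ℝ)) hu
  rwa [gronwallBound_x0] at h

set_option maxHeartbeats 1000000 in
/-- ODE tracking for a Euclidean stochastic approximation scheme with summable
perturbations: the iterates stay uniformly close to the ODE solutions started at
the iterates, over time windows of length `T`. -/
theorem sa_ode_tracking
    {d : ℕ} (H : EuclideanSpace ℝ (Fin d) → EuclideanSpace ℝ (Fin d))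
    (γ : NNReal) (hH : LipschitzWith γ H)
    (a : ℕ → ℝ) (ha : ∀ k, 0 < a k)
    (hdiv : Tendsto (fun n => ∑ m ∈ Finset.range n, a m) atTop atTop)
    (hsq : Summable fun k => (a k) ^ 2)
    (x : ℕ → EuclideanSpace ℝ (Fin d))
    (M r : ℕ → EuclideanSpace ℝ (Fin d))
    (C CH : ℝ)
    (hrec : ∀ k, x (k + 1) = x k + a k • H (x k) + a k • M (k + 1) + r k)
    (hr : ∀ k, ‖r k‖ ≤ C * (a k) ^ 2)
    (hHbdd : ∀ k, ‖H (x k)‖ ≤ CH)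
    (hM : ∃ L : EuclideanSpace ℝ (Fin d),
      Tendsto (fun N => ∑ k ∈ Finset.range N, a k • M (k + 1)) atTop (nhds L))
    (t : ℕ → ℝ) (ht : ∀ n, t n = ∑ m ∈ Finset.range n, a m)
    (X : ℕ → ℝ → EuclideanSpace ℝ (Fin d))
    (hX0 : ∀ n, X n (t n) = x n)
    (hXode : ∀ n, ∀ s : ℝ, HasDerivAt (X n) (H (X n s)) s) :
    ∀ T > (0 : ℝ), ∀ ε > (0 : ℝ), ∃ N : ℕ, ∀ n ≥ N, ∀ m : ℕ,
      t (n + m) ≤ t n + T → ‖x (n + m) - X n (t (n + m))‖ ≤ ε := by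
  intro T hT ε hε
  obtain ⟨L, hL⟩ := hM
  have hCH : 0 ≤ CH := le_trans (norm_nonneg _) (hHbdd 0)
  set K0 : ℝ := (γ : ℝ) with hK0def
  have hK0' : (0 : ℝ) ≤ K0 := γ.coe_nonneg
  have hC : 0 ≤ C := by
    have h0 := hr 0
    have h1 := norm_nonneg (r 0)
    nlinarith [pow_pos (ha 0) 2]
  have hXcont : ∀ n, Continuous (X n) :=
    fun n => continuous_iff_continuousAt.2 fun s => (hXode n s).continuousAt
  have hLip : ∀ u v : EuclideanSpace ℝ (Fin d), ‖H u - H v‖ ≤ K0 * ‖u - v‖ := by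
    intro u v
    simpa [dist_eq_norm] using hH.dist_le_mul u v
  have htmono : ∀ p q : ℕ, p ≤ q → t p ≤ t q := by
    intro p q hpq
    rw [ht p, ht q]
    exact Finset.sum_le_sum_of_subset_of_nonneg (Finset.range_subset_range.2 hpq)
      (fun i _ _ => (ha i).le)
  have htstep : ∀ k, t (k + 1) = t k + a k := by
    intro k; rw [ht, ht, Finset.sum_range_succ]
  -- growth bound on the ODE flow over the window
  have hgrow : ∀ n, ∀ s ∈ Icc (t n) (t n + T),
      ‖X n s - x n‖ ≤ gronwallBound 0 K0 CH (s - t n) := by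
    intro n
    apply norm_le_gronwallBound_of_norm_deriv_right_le
      (f' := fun s => H (X n s)) (δ := 0) (K := K0) (ε := CH)
    · exact ((hXcont n).sub continuous_const).continuousOn
    · intro s _
      exact ((hXode n s).sub_const (x n)).hasDerivWithinAt
    · rw [hX0 n]; simp
    · intro s _
      have h1 : ‖H (X n s)‖ ≤ ‖H (X n s) - H (x n)‖ + ‖H (x n)‖ := by
        simpa using norm_add_le (H (X n s) - H (x n)) (H (x n))
      have h2 := hLip (X n s) (x n)
      have h3 := hHbdd n
      linarith
  set G : ℝ := CH + K0 * gronwallBound 0 K0 CH T with hGdef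
  have hGnn : 0 ≤ G :=
    add_nonneg hCH (mul_nonneg hK0' (gb_zero_nonneg hK0' hCH hT.le))
  have hG : ∀ n, ∀ s ∈ Icc (t n) (t n + T), ‖H (X n s)‖ ≤ G := by
    intro n s hs
    have h1 : ‖H (X n s)‖ ≤ ‖H (X n s) - H (x n)‖ + ‖H (x n)‖ := by
      simpa using norm_add_le (H (X n s) - H (x n)) (H (x n))
    have h2 := hLip (X n s) (x n)
    have h3 := hHbdd n
    have h4 := hgrow n s hs
    have h5 : gronwallBound 0 K0 CH (s - t n) ≤ gronwallBound 0 K0 CH T :=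
      gb_zero_mono hK0' hCH (by linarith [hs.1]) (by linarith [hs.2])
    have h6 : K0 * ‖X n s - x n‖ ≤ K0 * gronwallBound 0 K0 CH T :=
      mul_le_mul_of_nonneg_left (le_trans h4 h5) hK0'
    rw [hGdef]; linarith
  -- time-Lipschitz bound for the flow on the window
  have hXlip : ∀ n, ∀ u ∈ Icc (t n) (t n + T), ∀ v ∈ Icc (t n) (t n + T),
      ‖X n v - X n u‖ ≤ G * ‖v - u‖ := by
    intro n u hu v hv
    exact (convex_Icc _ _).norm_image_sub_le_of_norm_hasDerivWithin_le
      (f' := fun s => H (X n s))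
      (fun s _ => (hXode n s).hasDerivWithinAt) (fun s hs => hG n s hs) hu hv
  -- one-step discretization error for the flow
  have hstep : ∀ n, ∀ u v : ℝ, u ∈ Icc (t n) (t n + T) → v ∈ Icc (t n) (t n + T) →
      u ≤ v → ‖X n v - X n u - (v - u) • H (X n u)‖ ≤ K0 * G * (v - u) ^ 2 := by
    intro n u v hu hv huv
    have hsub : Icc u v ⊆ Icc (t n) (t n + T) := Icc_subset_Icc hu.1 hv.2
    have key := (convex_Icc u v).norm_image_sub_le_of_norm_hasDerivWithin_le
      (f := fun s => X n s - s • H (X n u))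
      (f' := fun s => H (X n s) - H (X n u))
      (C := K0 * (G * (v - u)))
      (fun s hs => by
        have h1 : HasDerivAt (fun s : ℝ => s • H (X n u)) (H (X n u)) s := by
          simpa using (hasDerivAt_id s).smul_const (H (X n u))
        exact ((hXode n s).sub h1).hasDerivWithinAt)
      (fun s hs => by
        have h1 := hLip (X n s) (X n u)
        have h2 := hXlip n u hu s (hsub hs)
        have h3 : ‖s - u‖ ≤ v - u := by
          rw [Real.norm_eq_abs, abs_of_nonneg (by linarith [hs.1])]
          linarith [hs.2]
        have h4 : G * ‖s - u‖ ≤ G * (v - u) := mul_le_mul_of_nonneg_left h3 hGnn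
        calc ‖H (X n s) - H (X n u)‖ ≤ K0 * ‖X n s - X n u‖ := h1
          _ ≤ K0 * (G * ‖s - u‖) := mul_le_mul_of_nonneg_left h2 hK0'
          _ ≤ K0 * (G * (v - u)) := mul_le_mul_of_nonneg_left h4 hK0')
      ⟨le_rfl, huv⟩ ⟨huv, le_rfl⟩
    have heq : (X n v - v • H (X n u)) - (X n u - u • H (X n u))
        = X n v - X n u - (v - u) • H (X n u) := by
      rw [sub_smul]; abel
    have hnrm : ‖v - u‖ = v - u := by
      rw [Real.norm_eq_abs, abs_of_nonneg (by linarith)]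
    calc ‖X n v - X n u - (v - u) • H (X n u)‖
        = ‖(X n v - v • H (X n u)) - (X n u - u • H (X n u))‖ := by rw [heq]
      _ ≤ K0 * (G * (v - u)) * ‖v - u‖ := key
      _ = K0 * G * (v - u) ^ 2 := by rw [hnrm]; ring
  -- constants
  set K1 : ℝ := C + K0 * G with hK1def
  have hK1 : 0 ≤ K1 := add_nonneg hC (mul_nonneg hK0' hGnn)
  set Q : ℝ := Real.exp (K0 * T) * (K0 * T + K1) + 1 with hQdef
  have hQ1 : (1 : ℝ) ≤ Q := by
    have h1 := Real.exp_pos (K0 * T)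
    have h2 : 0 ≤ K0 * T := mul_nonneg hK0' hT.le
    nlinarith
  have hQ0 : (0 : ℝ) < Q := lt_of_lt_of_le one_pos hQ1
  set δ : ℝ := ε / Q with hδdef
  have hδ : 0 < δ := div_pos hε hQ0
  set ζ : ℕ → EuclideanSpace ℝ (Fin d) :=
    fun N => ∑ k ∈ Finset.range N, a k • M (k + 1) with hζdef
  have hζc : CauchySeq ζ := hL.cauchySeq
  obtain ⟨N1, hN1⟩ := Metric.cauchySeq_iff.1 hζc δ hδ
  have htail : Tendsto (fun n => ∑' k, a (k + n) ^ 2) atTop (nhds 0) :=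
    tendsto_sum_nat_add (fun k => a k ^ 2)
  obtain ⟨N2, hN2⟩ := (Metric.tendsto_atTop.1 htail) δ hδ
  refine ⟨max N1 N2, fun n hn m hwin => ?_⟩
  have hnN1 : N1 ≤ n := le_trans (le_max_left _ _) hn
  have hnN2 : N2 ≤ n := le_trans (le_max_right _ _) hn
  -- tail bounds for this n
  have hζb : ∀ p : ℕ, ‖ζ (n + p) - ζ n‖ ≤ δ := by
    intro p
    have h := hN1 (n + p) (le_trans hnN1 (Nat.le_add_right n p)) n hnN1
    rw [dist_eq_norm] at h
    exact h.le
  have hsq' : Summable fun k => a (k + n) ^ 2 :=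
    (summable_nat_add_iff (f := fun k => a k ^ 2) n).2 hsq
  have htailb : ∀ m' : ℕ, ∑ j ∈ Finset.range m', a (n + j) ^ 2 ≤ δ := by
    intro m'
    have h1 : ∑ j ∈ Finset.range m', a (n + j) ^ 2
        = ∑ j ∈ Finset.range m', a (j + n) ^ 2 := by
      refine Finset.sum_congr rfl fun j _ => by rw [add_comm]
    have h2 : ∑ j ∈ Finset.range m', a (j + n) ^ 2 ≤ ∑' k, a (k + n) ^ 2 :=
      Summable.sum_le_tsum _ (fun i _ => sq_nonneg _) hsq'
    have h3 := hN2 n hnN2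
    rw [Real.dist_eq, sub_zero] at h3
    have h4 : ∑' k, a (k + n) ^ 2 ≤ δ := le_trans (le_abs_self _) h3.le
    linarith [h1 ▸ h2]
  have htsum : ∀ m' : ℕ, t (n + m') - t n = ∑ j ∈ Finset.range m', a (n + j) := by
    intro m'
    induction m' with
    | zero => simp
    | succ m' ih =>
      show t (n + m' + 1) - t n = _
      rw [Finset.sum_range_succ, ← ih, htstep (n + m')]
      ring
  -- the key Gronwall induction on the perturbation-corrected iterates
  have key : ∀ m' : ℕ, t (n + m') ≤ t n + T →
      ‖(x (n + m') - (ζ (n + m') - ζ n)) - X n (t (n + m'))‖ ≤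
        (∑ j ∈ Finset.range m', (K0 * δ * a (n + j) + K1 * a (n + j) ^ 2)) *
          Real.exp (K0 * (t (n + m') - t n)) := by
    intro m'
    induction m' with
    | zero =>
      intro _
      simp [hX0 n]
    | succ m' ih =>
      intro hw
      have hstep' : t (n + m' + 1) = t (n + m') + a (n + m') := htstep (n + m')
      have hw' : t (n + m') ≤ t n + T := by
        have := ha (n + m'); linarith [hstep' ▸ hw]
      have hmem1 : t (n + m') ∈ Icc (t n) (t n + T) :=
        ⟨htmono n (n + m') (Nat.le_add_right n m'), hw'⟩
      have hmem2 : t (n + m' + 1) ∈ Icc (t n) (t n + T) :=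
        ⟨htmono n (n + m' + 1) (Nat.le_add_right n (m' + 1)), hw⟩
      have e_ih := ih hw'
      have huv : t (n + m') ≤ t (n + m' + 1) := by
        rw [hstep']; linarith [ha (n + m')]
      have hvu : t (n + m' + 1) - t (n + m') = a (n + m') := by rw [hstep']; ring
      -- recurrence for the corrected iterate
      have hy : (x (n + m' + 1) - (ζ (n + m' + 1) - ζ n)) =
          (x (n + m') - (ζ (n + m') - ζ n)) + a (n + m') • H (x (n + m')) + r (n + m') := by
        rw [hrec (n + m')]
        show _ - (∑ k ∈ Finset.range (n + m' + 1), a k • M (k + 1) - ζ n) = _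
        rw [Finset.sum_range_succ]
        show _ - (ζ (n + m') + a (n + m') • M (n + m' + 1) - ζ n) = _
        abel
      have hdecomp : (x (n + m' + 1) - (ζ (n + m' + 1) - ζ n)) - X n (t (n + m' + 1)) =
          ((x (n + m') - (ζ (n + m') - ζ n)) - X n (t (n + m')))
          + a (n + m') • (H (x (n + m')) - H (X n (t (n + m'))))
          + r (n + m')
          - (X n (t (n + m' + 1)) - X n (t (n + m'))
              - a (n + m') • H (X n (t (n + m')))) := by
        rw [hy, smul_sub]; abel
      set em : ℝ := ‖(x (n + m') - (ζ (n + m') - ζ n)) - X n (t (n + m'))‖ with hemdef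
      have hemnn : 0 ≤ em := norm_nonneg _
      have hxX : ‖x (n + m') - X n (t (n + m'))‖ ≤ em + δ := by
        have h3 : x (n + m') - X n (t (n + m'))
            = ((x (n + m') - (ζ (n + m') - ζ n)) - X n (t (n + m'))) + (ζ (n + m') - ζ n) := by
          abel
        rw [h3]
        have := norm_add_le ((x (n + m') - (ζ (n + m') - ζ n)) - X n (t (n + m')))
          (ζ (n + m') - ζ n)
        have hb := hζb m'
        linarith
      have hHd : ‖H (x (n + m')) - H (X n (t (n + m')))‖ ≤ K0 * (em + δ) :=
        le_trans (hLip _ _) (mul_le_mul_of_nonneg_left hxX hK0')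
      have hode := hstep n (t (n + m')) (t (n + m' + 1)) hmem1 hmem2 huv
      rw [hvu] at hode
      -- norm bound on the new error
      have hsum : ‖(x (n + m' + 1) - (ζ (n + m' + 1) - ζ n)) - X n (t (n + m' + 1))‖ ≤
          (1 + K0 * a (n + m')) * em + (K0 * δ * a (n + m') + K1 * a (n + m') ^ 2) := by
        rw [hdecomp]
        have h1 := norm_sub_le
          (((x (n + m') - (ζ (n + m') - ζ n)) - X n (t (n + m')))
            + a (n + m') • (H (x (n + m')) - H (X n (t (n + m'))))
            + r (n + m'))
          (X n (t (n + m' + 1)) - X n (t (n + m'))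
            - a (n + m') • H (X n (t (n + m'))))
        have h2 := norm_add_le
          (((x (n + m') - (ζ (n + m') - ζ n)) - X n (t (n + m')))
            + a (n + m') • (H (x (n + m')) - H (X n (t (n + m')))))
          (r (n + m'))
        have h3 := norm_add_le
          ((x (n + m') - (ζ (n + m') - ζ n)) - X n (t (n + m')))
          (a (n + m') • (H (x (n + m')) - H (X n (t (n + m')))))
        have h4 : ‖a (n + m') • (H (x (n + m')) - H (X n (t (n + m'))))‖
            ≤ a (n + m') * (K0 * (em + δ)) := by
          rw [norm_smul, Real.norm_eq_abs, abs_of_pos (ha (n + m'))]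
          exact mul_le_mul_of_nonneg_left hHd (ha (n + m')).le
        have h5 := hr (n + m')
        rw [hK1def]
        nlinarith [ha (n + m'), sq_nonneg (a (n + m')), hemdef]
      have h1exp : 1 + K0 * a (n + m') ≤ Real.exp (K0 * a (n + m')) := by
        have := Real.add_one_le_exp (K0 * a (n + m')); linarith
      have hPnn : 0 ≤ ∑ j ∈ Finset.range m', (K0 * δ * a (n + j) + K1 * a (n + j) ^ 2) :=
        Finset.sum_nonneg fun j _ => add_nonneg
          (mul_nonneg (mul_nonneg hK0' hδ.le) (ha (n + j)).le)
          (mul_nonneg hK1 (sq_nonneg _))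
      have hcnn : 0 ≤ K0 * δ * a (n + m') + K1 * a (n + m') ^ 2 :=
        add_nonneg (mul_nonneg (mul_nonneg hK0' hδ.le) (ha (n + m')).le)
          (mul_nonneg hK1 (sq_nonneg _))
      have hexpnn : (1 : ℝ) ≤ Real.exp (K0 * (t (n + m' + 1) - t n)) := by
        rw [Real.one_le_exp_iff]
        exact mul_nonneg hK0' (by linarith [htmono n (n + m' + 1) (Nat.le_add_right n (m' + 1))])
      have hfac : (0 : ℝ) ≤ 1 + K0 * a (n + m') := by
        have := mul_nonneg hK0' (ha (n + m')).le; linarith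
      have hexpsplit : Real.exp (K0 * a (n + m')) * Real.exp (K0 * (t (n + m') - t n))
          = Real.exp (K0 * (t (n + m' + 1) - t n)) := by
        rw [← Real.exp_add]
        congr 1
        rw [hstep']; ring
      calc ‖(x (n + m' + 1) - (ζ (n + m' + 1) - ζ n)) - X n (t (n + m' + 1))‖
          ≤ (1 + K0 * a (n + m')) * em + (K0 * δ * a (n + m') + K1 * a (n + m') ^ 2) := hsum
        _ ≤ (1 + K0 * a (n + m')) *
              ((∑ j ∈ Finset.range m', (K0 * δ * a (n + j) + K1 * a (n + j) ^ 2)) *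
                Real.exp (K0 * (t (n + m') - t n)))
            + (K0 * δ * a (n + m') + K1 * a (n + m') ^ 2) := by
            have := mul_le_mul_of_nonneg_left e_ih hfac
            linarith
        _ ≤ Real.exp (K0 * a (n + m')) *
              ((∑ j ∈ Finset.range m', (K0 * δ * a (n + j) + K1 * a (n + j) ^ 2)) *
                Real.exp (K0 * (t (n + m') - t n)))
            + (K0 * δ * a (n + m') + K1 * a (n + m') ^ 2) := by
            have hnn : 0 ≤ (∑ j ∈ Finset.range m', (K0 * δ * a (n + j) + K1 * a (n + j) ^ 2)) *
                Real.exp (K0 * (t (n + m') - t n)) :=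
              mul_nonneg hPnn (Real.exp_pos _).le
            have hmm := mul_le_mul_of_nonneg_right h1exp hnn
            linarith
        _ = (∑ j ∈ Finset.range m', (K0 * δ * a (n + j) + K1 * a (n + j) ^ 2)) *
              Real.exp (K0 * (t (n + m' + 1) - t n))
            + (K0 * δ * a (n + m') + K1 * a (n + m') ^ 2) := by
            rw [← hexpsplit]; ring
        _ ≤ (∑ j ∈ Finset.range m', (K0 * δ * a (n + j) + K1 * a (n + j) ^ 2)) *
              Real.exp (K0 * (t (n + m' + 1) - t n))
            + (K0 * δ * a (n + m') + K1 * a (n + m') ^ 2) *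
              Real.exp (K0 * (t (n + m' + 1) - t n)) := by
            have hmm := mul_le_mul_of_nonneg_left hexpnn hcnn
            linarith
        _ = (∑ j ∈ Finset.range (m' + 1), (K0 * δ * a (n + j) + K1 * a (n + j) ^ 2)) *
              Real.exp (K0 * (t (n + m' + 1) - t n)) := by
            rw [Finset.sum_range_succ]; ring
  -- now conclude for the given m
  have hkey := key m hwin
  have hPle : (∑ j ∈ Finset.range m, (K0 * δ * a (n + j) + K1 * a (n + j) ^ 2))
      ≤ K0 * δ * T + K1 * δ := by
    have h1 : ∑ j ∈ Finset.range m, (K0 * δ * a (n + j) + K1 * a (n + j) ^ 2)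
        = K0 * δ * (∑ j ∈ Finset.range m, a (n + j))
          + K1 * (∑ j ∈ Finset.range m, a (n + j) ^ 2) := by
      rw [Finset.sum_add_distrib, Finset.mul_sum, Finset.mul_sum]
    have h2 : ∑ j ∈ Finset.range m, a (n + j) ≤ T := by
      rw [← htsum m]; linarith
    have h3 := htailb m
    have h4 : K0 * δ * (∑ j ∈ Finset.range m, a (n + j)) ≤ K0 * δ * T :=
      mul_le_mul_of_nonneg_left h2 (mul_nonneg hK0' hδ.le)
    have h5 : K1 * (∑ j ∈ Finset.range m, a (n + j) ^ 2) ≤ K1 * δ :=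
      mul_le_mul_of_nonneg_left h3 hK1
    linarith [h1 ▸ le_refl (∑ j ∈ Finset.range m, (K0 * δ * a (n + j) + K1 * a (n + j) ^ 2))]
  have hPnn : 0 ≤ ∑ j ∈ Finset.range m, (K0 * δ * a (n + j) + K1 * a (n + j) ^ 2) :=
    Finset.sum_nonneg fun j _ => add_nonneg
      (mul_nonneg (mul_nonneg hK0' hδ.le) (ha (n + j)).le)
      (mul_nonneg hK1 (sq_nonneg _))
  have hexple : Real.exp (K0 * (t (n + m) - t n)) ≤ Real.exp (K0 * T) :=
    Real.exp_le_exp.2 (mul_le_mul_of_nonneg_left (by linarith) hK0')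
  have hfinal1 : ‖(x (n + m) - (ζ (n + m) - ζ n)) - X n (t (n + m))‖ ≤
      (K0 * δ * T + K1 * δ) * Real.exp (K0 * T) := by
    calc ‖(x (n + m) - (ζ (n + m) - ζ n)) - X n (t (n + m))‖
        ≤ (∑ j ∈ Finset.range m, (K0 * δ * a (n + j) + K1 * a (n + j) ^ 2)) *
            Real.exp (K0 * (t (n + m) - t n)) := hkey
      _ ≤ (K0 * δ * T + K1 * δ) * Real.exp (K0 * T) :=
          mul_le_mul hPle hexple (Real.exp_pos _).le
            (by nlinarith [mul_nonneg (mul_nonneg hK0' hδ.le) hT.le, mul_nonneg hK1 hδ.le])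
  have hsplit : x (n + m) - X n (t (n + m))
      = ((x (n + m) - (ζ (n + m) - ζ n)) - X n (t (n + m))) + (ζ (n + m) - ζ n) := by
    abel
  have hfinal2 : ‖x (n + m) - X n (t (n + m))‖ ≤
      (K0 * δ * T + K1 * δ) * Real.exp (K0 * T) + δ := by
    rw [hsplit]
    have h1 := norm_add_le ((x (n + m) - (ζ (n + m) - ζ n)) - X n (t (n + m)))
      (ζ (n + m) - ζ n)
    have h2 := hζb m
    linarith
  have hQeq : (K0 * δ * T + K1 * δ) * Real.exp (K0 * T) + δ = δ * Q := by
    rw [hQdef]; ring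
  have hδQ : δ * Q = ε := by
    rw [hδdef]; field_simp
  linarith [hQeq ▸ hfinal2, hδQ ▸ le_refl (δ * Q)]
end
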